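/- arXiv:2306.13201 — 5 statements merged into one kernel-verified Lean document; each statement's English description precedes it below -/
import Mathlib

section
/- The edge set of the complete graph K_n on n ≥ 2 vertices cannot be partitioned into fewer than n-1 stars, where a star is a set of edges all sharing a common vertex. -/
/-- The edge set of the complete graph on `Fin n`: all non-diagonal unordered pairs. -/
def Kedges (n : ℕ) : Finset (Sym2 (Fin n)) :=
  Finset.univ.filter fun e => ¬ e.IsDiag

/-- `c` is a valid center assignment witnessing that the edge set `E` is a star-forest:
every edge contains its center, and any two distinct edges sharing a vertex are both
centered at that shared vertex (so every connected component is a star). -/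
def IsStarForestOn {n : ℕ} (E : Finset (Sym2 (Fin n))) (c : Sym2 (Fin n) → Fin n) : Prop :=
  (∀ e ∈ E, c e ∈ e) ∧
    ∀ e ∈ E, ∀ f ∈ E, e ≠ f → ∀ v : Fin n, v ∈ e → v ∈ f → c e = v

/-- `E` is (the edge set of) a star-forest. -/
def IsStarForest {n : ℕ} (E : Finset (Sym2 (Fin n))) : Prop :=
  ∃ c, IsStarForestOn E c

/-- `E` is a star-forest with at most `k` edge-containing star components. -/
def IsKStarForest {n : ℕ} (E : Finset (Sym2 (Fin n))) (k : ℕ) : Prop :=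
  ∃ c, IsStarForestOn E c ∧ (E.image c).card ≤ k

/-- `E` is a 2-star-forest with exactly the two designated centers `a` and `b`,
each center having a nonempty star. -/
def IsTwoStar {n : ℕ} (E : Finset (Sym2 (Fin n))) (a b : Fin n) : Prop :=
  ∃ c, IsStarForestOn E c ∧ (∀ e ∈ E, c e = a ∨ c e = b) ∧
    (∃ e ∈ E, c e = a) ∧ (∃ e ∈ E, c e = b)

/-- Combinatorial crossing of two chords of the convex polygon with vertices
`0, 1, …, n-1` in convex (cyclic) position. -/
def Cross {n : ℕ} (e f : Sym2 (Fin n)) : Prop :=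
  ∃ a b c d : Fin n, e = s(a, b) ∧ f = s(c, d) ∧
    ((a < c ∧ c < b ∧ b < d) ∨ (c < a ∧ a < d ∧ d < b))

/-- A plane (crossing-free) star-forest on the convex point set. -/
def PlaneStarForest {n : ℕ} (E : Finset (Sym2 (Fin n))) : Prop :=
  IsStarForest E ∧ ∀ e ∈ E, ∀ f ∈ E, ¬ Cross e f

/-! The centres of the stars form a vertex cover of `K_n`, and every vertex cover of `K_n` has
at least `n - 1` vertices, since two vertices outside it would span an uncovered edge. -/

open SimpleGraph

theorem mem_Kedges_iff {n : ℕ} {e : Sym2 (Fin n)} :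
    e ∈ Kedges n ↔ e ∈ (⊤ : SimpleGraph (Fin n)).edgeSet := by
  simp [Kedges, edgeSet_top]

theorem SimpleGraph.isVertexCover_range_of_cover {V ι : Type*} {G : SimpleGraph V}
    (F : ι → Set (Sym2 V)) (v : ι → V) (hstar : ∀ i, ∀ e ∈ F i, v i ∈ e)
    (hcover : ∀ e ∈ G.edgeSet, ∃ i, e ∈ F i) : G.IsVertexCover (Set.range v) := by
  intro a b hab
  obtain ⟨i, hi⟩ := hcover s(a, b) hab
  rcases Sym2.mem_iff.mp (hstar i _ hi) with h | h
  · exact .inl ⟨i, h⟩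
  · exact .inr ⟨i, h⟩

theorem SimpleGraph.card_sub_one_le_of_isVertexCover_top_range {V ι : Type*} [Fintype V]
    [Fintype ι] {v : ι → V} (hv : (⊤ : SimpleGraph V).IsVertexCover (Set.range v)) :
    Fintype.card V - 1 ≤ Fintype.card ι := by
  have h : (Fintype.card V - 1 : ℕ∞) ≤ Fintype.card ι :=
    calc (Fintype.card V - 1 : ℕ∞)
      _ = vertexCoverNum (⊤ : SimpleGraph V) := by
        rw [vertexCoverNum_top, ENat.card_eq_coe_fintype_card]
      _ ≤ (Set.range v).encard := hv.vertexCoverNum_le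
      _ ≤ Fintype.card ι := by
        simpa [Set.image_univ] using Set.encard_image_le v Set.univ
  exact_mod_cast h

theorem stmt0_general (n t : ℕ) (F : Fin t → Finset (Sym2 (Fin n)))
    (hstar : ∀ i, ∃ v : Fin n, ∀ e ∈ F i, v ∈ e)
    (hcover : ∀ e ∈ Kedges n, ∃ i, e ∈ F i) :
    n - 1 ≤ t := by
  choose v hv using hstar
  have hvc : (⊤ : SimpleGraph (Fin n)).IsVertexCover (Set.range v) :=
    isVertexCover_range_of_cover (fun i ↦ F i) v hv fun e he ↦ hcover e (mem_Kedges_iff.mpr he)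
  simpa only [Fintype.card_fin] using card_sub_one_le_of_isVertexCover_top_range hvc

/-- the edge set of K_n (n ≥ 2) cannot be partitioned into fewer
than n-1 stars (sets of edges all sharing a common vertex). -/
theorem stmt0 (n t : ℕ) (hn : 2 ≤ n) (F : Fin t → Finset (Sym2 (Fin n)))
    (hstar : ∀ i, ∃ v : Fin n, ∀ e ∈ F i, v ∈ e)
    (hsub : ∀ i, F i ⊆ Kedges n)
    (hdisj : ∀ i j, i ≠ j → Disjoint (F i) (F j))
    (hcover : ∀ e ∈ Kedges n, ∃ i, e ∈ F i) :
    n - 1 ≤ t :=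
  stmt0_general n t F hstar hcover
end

section
/- For every n ≥ 1, the edge set of the complete graph K_n can be partitioned into at most ⌈n/2⌉ + 1 star-forests. -/
def chordClass (m a b : ℕ) : ℕ :=
  if b - a < m then a % m else if b - a = m then m else b % m

def chordCenter (m a b : ℕ) : ℕ :=
  if m < b - a then b else a

lemma mod_eq_ite_of_lt_two_mul {m x : ℕ} (h : x < 2 * m) :
    x % m = if x < m then x else x - m := by
  split_ifs with hx
  · exact Nat.mod_eq_of_lt hx
  · rw [Nat.mod_eq_sub_mod (by omega), Nat.mod_eq_of_lt (by omega)]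

theorem chordCenter_eq_of_chordClass_eq {m a b a' b' v : ℕ}
    (hb : b < 2 * m) (hb' : b' < 2 * m) (hab : a < b) (hab' : a' < b')
    (hclass : chordClass m a b = chordClass m a' b') (hne : (a, b) ≠ (a', b'))
    (hv : v = a ∨ v = b) (hv' : v = a' ∨ v = b') :
    chordCenter m a b = v := by
  have ha_mod := mod_eq_ite_of_lt_two_mul (x := a) (m := m) (by omega)
  have hb_mod := mod_eq_ite_of_lt_two_mul hb
  have ha'_mod := mod_eq_ite_of_lt_two_mul (x := a') (m := m) (by omega)
  have hb'_mod := mod_eq_ite_of_lt_two_mul hb'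
  simp only [chordClass, chordCenter, ne_eq, Prod.mk.injEq] at hclass hne ⊢
  split_ifs at hclass ha_mod hb_mod ha'_mod hb'_mod ⊢ <;> omega

lemma chordClass_le {m : ℕ} (hm : 0 < m) (a b : ℕ) : chordClass m a b ≤ m := by
  have := Nat.mod_lt a hm
  have := Nat.mod_lt b hm
  unfold chordClass
  split_ifs <;> omega

namespace Sym2

lemma exists_eq_mk_of_lt {α : Type*} [LinearOrder α] {e : Sym2 α} (he : ¬ e.IsDiag) :
    ∃ x y, x < y ∧ e = s(x, y) := by
  induction e using Sym2.ind with | _ x y => ?_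
  rcases lt_trichotomy x y with h | rfl | h
  · exact ⟨x, y, h, rfl⟩
  · exact absurd (Sym2.mk_isDiag_iff.2 rfl) he
  · exact ⟨y, x, h, Sym2.eq_swap⟩

end Sym2

section Chords

variable (m : ℕ) {n : ℕ}

def edgeClass : Sym2 (Fin n) → ℕ :=
  Sym2.lift ⟨fun x y => chordClass m ↑(min x y) ↑(max x y), by
    intro x y; simp only [min_comm, max_comm]⟩

def edgeCenter : Sym2 (Fin n) → Fin n :=
  Sym2.lift ⟨fun x y => if m < (↑(max x y) : ℕ) - ↑(min x y) then max x y else min x y, by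
    intro x y; simp only [min_comm, max_comm]⟩

variable {m}

lemma edgeClass_mk_of_lt {x y : Fin n} (h : x < y) :
    edgeClass m s(x, y) = chordClass m x y := by
  simp only [edgeClass, Sym2.lift_mk, min_eq_left h.le, max_eq_right h.le]

lemma val_edgeCenter_mk_of_lt {x y : Fin n} (h : x < y) :
    (edgeCenter m s(x, y) : ℕ) = chordCenter m x y := by
  simp only [edgeCenter, Sym2.lift_mk, min_eq_left h.le, max_eq_right h.le, chordCenter]
  split_ifs <;> rfl

lemma edgeCenter_mem (e : Sym2 (Fin n)) : edgeCenter m e ∈ e := by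
  induction e using Sym2.ind with | _ x y => ?_
  simp only [edgeCenter, Sym2.lift_mk]
  split_ifs
  · rcases max_choice x y with h | h <;> simp [h]
  · rcases min_choice x y with h | h <;> simp [h]

lemma edgeClass_le (hm : 0 < m) (e : Sym2 (Fin n)) : edgeClass m e ≤ m := by
  induction e using Sym2.ind with | _ x y => exact chordClass_le hm _ _

lemma edgeCenter_eq_of_edgeClass_eq (hn : n ≤ 2 * m) {e f : Sym2 (Fin n)}
    (he : ¬ e.IsDiag) (hf : ¬ f.IsDiag) (hclass : edgeClass m e = edgeClass m f) (hne : e ≠ f)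
    {v : Fin n} (hve : v ∈ e) (hvf : v ∈ f) : edgeCenter m e = v := by
  obtain ⟨x, y, hxy, rfl⟩ := Sym2.exists_eq_mk_of_lt he
  obtain ⟨x', y', hxy', rfl⟩ := Sym2.exists_eq_mk_of_lt hf
  rw [edgeClass_mk_of_lt hxy, edgeClass_mk_of_lt hxy'] at hclass
  rw [Sym2.mem_iff] at hve hvf
  refine Fin.ext ((val_edgeCenter_mk_of_lt hxy).trans ?_)
  refine chordCenter_eq_of_chordClass_eq (by omega) (by omega) hxy hxy' hclass ?_
    (by rcases hve with rfl | rfl <;> simp) (by rcases hvf with rfl | rfl <;> simp)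
  intro h
  simp only [Prod.mk.injEq] at h
  exact hne (by rw [Fin.ext h.1, Fin.ext h.2])

lemma isStarForestOn_edgeClass_fiber (hn : n ≤ 2 * m) (i : ℕ) :
    IsStarForestOn ((Kedges n).filter fun e => edgeClass m e = i) (edgeCenter m) := by
  refine ⟨fun e _ => edgeCenter_mem e, fun e he f hf hne v hve hvf => ?_⟩
  simp only [Kedges, Finset.mem_filter, Finset.mem_univ, true_and] at he hf
  exact edgeCenter_eq_of_edgeClass_eq hn he.1 hf.1 (he.2.trans hf.2.symm) hne hve hvf

end Chords

/-- for every n ≥ 1, the edge set of K_n can be partitioned into at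
most ⌈n/2⌉ + 1 star-forests (empty parts allowed). -/
theorem stmt1 (n : ℕ) (hn : 1 ≤ n) :
    ∃ F : Fin ((n + 1) / 2 + 1) → Finset (Sym2 (Fin n)),
      (∀ i, IsStarForest (F i)) ∧ (∀ i, F i ⊆ Kedges n) ∧
      (∀ i j, i ≠ j → Disjoint (F i) (F j)) ∧
      (∀ e ∈ Kedges n, ∃ i, e ∈ F i) := by
  set m := (n + 1) / 2
  refine ⟨fun i => (Kedges n).filter fun e => edgeClass m e = i, fun i => ?_,
    fun i => Finset.filter_subset _ _, fun i j hij => ?_, fun e he => ?_⟩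
  · exact ⟨edgeCenter m, isStarForestOn_edgeClass_fiber (by omega) i⟩
  · refine Finset.disjoint_filter.2 fun e _ hi hj => hij (Fin.ext ?_)
    exact hi.symm.trans hj
  · refine ⟨⟨edgeClass m e, Nat.lt_succ_of_le (edgeClass_le (by omega) e)⟩, ?_⟩
    simp [he]
end

section
/- For every n > 3, the edge set of the complete graph K_n cannot be covered by fewer than ⌈3n/4⌉ 2-star-forests. -/
open Finset

theorem Finset.eq_of_card_le_two {α : Type*} {s : Finset α} (hs : #s ≤ 2) {a b x : α}
    (ha : a ∈ s) (hb : b ∈ s) (hx : x ∈ s) (hax : a ≠ x) (hbx : b ≠ x) : a = b := by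
  by_contra hab
  exact absurd (two_lt_card.2 ⟨a, ha, b, hb, x, hx, hab, hax, hbx⟩) (not_lt.2 hs)

section CenterFamily

variable {V ι : Type*} [Fintype ι] [DecidableEq V] (C : ι → Finset V)

def centerCount (v : V) : ℕ := #{i | v ∈ C i}

def IsLonelyPartner (u w : V) : Prop :=
  centerCount C u = 1 ∧ u ≠ w ∧ ∃ i, u ∈ C i ∧ w ∈ C i

instance : DecidableRel (IsLonelyPartner C) := fun _ _ => by
  unfold IsLonelyPartner; infer_instance

variable {C}

theorem eq_of_centerCount_eq_one {u : V} {i j : ι} (h : centerCount C u = 1) (hi : u ∈ C i)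
    (hj : u ∈ C j) : j = i :=
  card_le_one.1 h.le j (by simpa using hj) i (by simpa using hi)

theorem eq_or_eq_of_centerCount_eq_two {w : V} {i j k : ι} (h : centerCount C w = 2)
    (hij : i ≠ j) (hi : w ∈ C i) (hj : w ∈ C j) (hk : w ∈ C k) : k = i ∨ k = j := by
  classical
  have hsub : ({i, j} : Finset ι) ⊆ ({l | w ∈ C l} : Finset ι) := by
    intro l hl
    rcases mem_insert.1 hl with rfl | hl
    · simpa using hi
    · simpa [mem_singleton.1 hl] using hj
  have heq := eq_of_subset_of_card_le hsub (by rw [card_pair hij]; exact h.le)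
  have hk' : k ∈ ({i, j} : Finset ι) := heq ▸ mem_filter.2 ⟨mem_univ k, hk⟩
  simpa using hk'

theorem two_mul_centerCount_le (hC : ∀ i, #(C i) ≤ 2) (v : V) :
    2 * centerCount C v ≤ ∑ i ∈ {i | v ∈ C i}, 4 / #(C i) := by
  rw [centerCount, mul_comm, ← smul_eq_mul, ← sum_const]
  refine sum_le_sum fun i hi => ?_
  have : 0 < #(C i) := card_pos.2 ⟨v, (mem_filter.1 hi).2⟩
  have := hC i
  interval_cases #(C i) <;> norm_num

theorem card_lonelyPartner_le_centerCount [Fintype V] (hC : ∀ i, #(C i) ≤ 2) (v : V) :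
    #{u | IsLonelyPartner C u v} ≤ centerCount C v := by
  refine card_le_card_of_forall_subsingleton (fun u i => u ∈ C i) (fun u hu => ?_) ?_
  · obtain ⟨-, -, i, hu, hv⟩ := (mem_filter.1 hu).2
    exact ⟨i, by simpa using hv, hu⟩
  · intro i hi u hu u' hu'
    exact eq_of_card_le_two (hC i) hu.2 hu'.2 (by simpa using hi) (mem_filter.1 hu.1).2.2.1
      (mem_filter.1 hu'.1).2.2.1

theorem three_add_card_lonelyPartner_le [Fintype V] (hC : ∀ i, #(C i) ≤ 2)
    (hcov : ∀ v, ∃ i, v ∈ C i)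
    (hlonely : ∀ u w i, u ≠ w → centerCount C u = 1 → u ∈ C i → w ∈ C i →
      centerCount C w ≠ 1)
    (hpair : ∀ u₁ u₂ w i₁ i₂, i₁ ≠ i₂ → u₁ ≠ u₂ → u₁ ≠ w → u₂ ≠ w →
      centerCount C u₁ = 1 → centerCount C u₂ = 1 →
      u₁ ∈ C i₁ → w ∈ C i₁ → u₂ ∈ C i₂ → w ∈ C i₂ → centerCount C w ≠ 2) (v : V) :
    3 + #{u | IsLonelyPartner C u v} ≤
      ∑ i ∈ {i | v ∈ C i}, 4 / #(C i) + #{w | IsLonelyPartner C v w} := by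
  have htokens := two_mul_centerCount_le hC v
  have hin := card_lonelyPartner_le_centerCount hC v
  obtain ⟨i, hvi⟩ := hcov v
  have hpos : 0 < centerCount C v := card_pos.2 ⟨i, by simpa using hvi⟩
  rcases (by omega : centerCount C v = 1 ∨ centerCount C v = 2 ∨ 3 ≤ centerCount C v)
    with hv | hv | hv
  · have hin0 : #{u | IsLonelyPartner C u v} = 0 := by
      refine card_eq_zero.2 (filter_eq_empty_iff.2 fun u _ ⟨hu, huv, j, huj, hvj⟩ => ?_)
      exact hlonely u v j huv hu huj hvj hv
    have hsum : ∑ j ∈ {j | v ∈ C j}, 4 / #(C j) = 4 / #(C i) := by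
      rw [sum_eq_single_of_mem i (by simpa using hvi)]
      exact fun j hj hji => absurd (eq_of_centerCount_eq_one hv hvi (mem_filter.1 hj).2) hji
    rw [hin0, hsum]
    have hci_pos : 0 < #(C i) := card_pos.2 ⟨v, hvi⟩
    rcases (by have := hC i; omega : #(C i) = 1 ∨ #(C i) = 2) with hci | hci
    · rw [hci]; omega
    · obtain ⟨w, hw, hwv⟩ := exists_mem_ne (by omega : 1 < #(C i)) v
      have : 0 < #{w | IsLonelyPartner C v w} :=
        card_pos.2 ⟨w, mem_filter.2 ⟨mem_univ _, hv, hwv.symm, i, hvi, hw⟩⟩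
      rw [hci]; omega
  · have hin1 : #{u | IsLonelyPartner C u v} ≤ 1 := by
      refine card_le_one.2 fun u hu u' hu' => ?_
      obtain ⟨hu1, huv, i₁, hui, hvi₁⟩ := (mem_filter.1 hu).2
      obtain ⟨hu'1, hu'v, i₂, hu'i, hvi₂⟩ := (mem_filter.1 hu').2
      by_contra huu'
      by_cases hi : i₁ = i₂
      · subst hi
        exact huu' (eq_of_card_le_two (hC i₁) hui hu'i hvi₁ huv hu'v)
      · exact hpair u u' v i₁ i₂ hi huu' huv hu'v hu1 hu'1 hui hvi₁ hu'i hvi₂ hv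
    omega
  · omega

theorem three_mul_card_le_four_mul_card [Fintype V] (hC : ∀ i, #(C i) ≤ 2)
    (hcov : ∀ v, ∃ i, v ∈ C i)
    (hlonely : ∀ u w i, u ≠ w → centerCount C u = 1 → u ∈ C i → w ∈ C i →
      centerCount C w ≠ 1)
    (hpair : ∀ u₁ u₂ w i₁ i₂, i₁ ≠ i₂ → u₁ ≠ u₂ → u₁ ≠ w → u₂ ≠ w →
      centerCount C u₁ = 1 → centerCount C u₂ = 1 →
      u₁ ∈ C i₁ → w ∈ C i₁ → u₂ ∈ C i₂ → w ∈ C i₂ → centerCount C w ≠ 2) :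
    3 * Fintype.card V ≤ 4 * Fintype.card ι := by
  have hdraws : ∑ v, #{u | IsLonelyPartner C u v} = ∑ v, #{w | IsLonelyPartner C v w} :=
    (sum_card_bipartiteAbove_eq_sum_card_bipartiteBelow (IsLonelyPartner C)).symm
  have htokens :
      ∑ v, ∑ i ∈ {i | v ∈ C i}, 4 / #(C i) = ∑ i, #(C i) * (4 / #(C i)) := by
    rw [sum_comm' (t' := univ) (s' := C) (fun v i => by simp)]
    simp only [sum_const, smul_eq_mul]
  have hdischarge := sum_le_sum fun v (_ : v ∈ univ) =>
    three_add_card_lonelyPartner_le hC hcov hlonely hpair v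
  have hbudget : ∑ i, #(C i) * (4 / #(C i)) ≤ ∑ _i : ι, 4 :=
    sum_le_sum fun i _ => Nat.mul_div_le 4 _
  simp only [sum_add_distrib, sum_const, card_univ, smul_eq_mul] at hdischarge hbudget
  omega

end CenterFamily

namespace IsStarForestOn

variable {n : ℕ} {E : Finset (Sym2 (Fin n))} {c : Sym2 (Fin n) → Fin n}

theorem center_eq_or_center_eq (h : IsStarForestOn E c) {u v : Fin n} (he : s(u, v) ∈ E) :
    c s(u, v) = u ∨ c s(u, v) = v :=
  Sym2.mem_iff.1 (h.1 _ he)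

theorem center_eq_of_mk_mem_of_mk_mem (h : IsStarForestOn E c) {u u' v : Fin n}
    (hu : s(u, v) ∈ E) (hu' : s(u', v) ∈ E) (huu' : u ≠ u') : c s(u, v) = v :=
  h.2 _ hu _ hu' (fun he => huu' (Sym2.congr_left.1 he)) v (Sym2.mem_mk_right u v)
    (Sym2.mem_mk_right u' v)

theorem mk_notMem_of_mem_image (h : IsStarForestOn E c) {x y : Fin n} (hx : x ∈ E.image c)
    (hy : y ∈ E.image c) (hxy : x ≠ y) : s(x, y) ∉ E := by
  suffices key : ∀ {x y : Fin n}, y ∈ E.image c → x ≠ y → s(x, y) ∈ E → c s(x, y) ≠ x by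
    intro he
    rcases h.center_eq_or_center_eq he with hc | hc
    · exact key hy hxy he hc
    · exact key hx hxy.symm (Sym2.eq_swap ▸ he) (Sym2.eq_swap ▸ hc)
  intro x y hy hxy he hc
  obtain ⟨f, hf, rfl⟩ := mem_image.1 hy
  have hne : s(x, c f) ≠ f := fun hxf => hxy (by rw [← hc, hxf])
  exact hxy (hc.symm.trans (h.2 _ he f hf hne _ (Sym2.mem_mk_right x _) (h.1 f hf)))

end IsStarForestOn

def centers {n t : ℕ} (F : Fin t → Finset (Sym2 (Fin n))) (c : Fin t → Sym2 (Fin n) → Fin n)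
    (i : Fin t) : Finset (Fin n) :=
  (F i).image (c i)

section Cover

variable {n t : ℕ} {F : Fin t → Finset (Sym2 (Fin n))} {c : Fin t → Sym2 (Fin n) → Fin n}

theorem center_mem_centers {i : Fin t} {e : Sym2 (Fin n)} (he : e ∈ F i) :
    c i e ∈ centers F c i :=
  mem_image_of_mem _ he

theorem exists_mem_centers (hc : ∀ i, IsStarForestOn (F i) (c i))
    (hcover : ∀ u v, u ≠ v → ∃ i, s(u, v) ∈ F i) (htn : t + 1 < n) (v : Fin n) :
    ∃ i, v ∈ centers F c i := by
  by_contra! hv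
  have hcard : #(univ.erase v) ≤ #(univ : Finset (Fin t)) := by
    refine card_le_card_of_forall_subsingleton (fun u i => s(u, v) ∈ F i) (fun u hu => ?_) ?_
    · obtain ⟨i, hi⟩ := hcover u v (ne_of_mem_erase hu)
      exact ⟨i, mem_univ i, hi⟩
    · intro i _ u hu u' hu'
      by_contra huu'
      have hvi := (hc i).center_eq_of_mk_mem_of_mk_mem hu.2 hu'.2 huu'
      exact hv i (hvi ▸ center_mem_centers hu.2)
  simp only [card_erase_of_mem (mem_univ v), card_univ, Fintype.card_fin] at hcard
  omega

theorem exists_ne_mk_mem_of_centerCount_eq_one (hc : ∀ i, IsStarForestOn (F i) (c i))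
    (hcover : ∀ u v, u ≠ v → ∃ i, s(u, v) ∈ F i) {u w : Fin n} {i : Fin t} (huw : u ≠ w)
    (hu : centerCount (centers F c) u = 1) (hui : u ∈ centers F c i) (hwi : w ∈ centers F c i) :
    ∃ k ≠ i, s(u, w) ∈ F k ∧ c k s(u, w) = w := by
  obtain ⟨k, hk⟩ := hcover u w huw
  have hki : k ≠ i := by
    rintro rfl
    exact (hc k).mk_notMem_of_mem_image hui hwi huw hk
  refine ⟨k, hki, hk, ?_⟩
  rcases (hc k).center_eq_or_center_eq hk with hck | hck
  · exact absurd (eq_of_centerCount_eq_one hu hui (hck ▸ center_mem_centers hk)) hki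
  · exact hck

theorem centerCount_ne_one_of_mem_centers (hc : ∀ i, IsStarForestOn (F i) (c i))
    (hcover : ∀ u v, u ≠ v → ∃ i, s(u, v) ∈ F i) {u w : Fin n} {i : Fin t} (huw : u ≠ w)
    (hu : centerCount (centers F c) u = 1) (hui : u ∈ centers F c i)
    (hwi : w ∈ centers F c i) : centerCount (centers F c) w ≠ 1 := by
  intro hw
  obtain ⟨k, hki, hk, hck⟩ := exists_ne_mk_mem_of_centerCount_eq_one hc hcover huw hu hui hwi
  exact hki (eq_of_centerCount_eq_one hw hwi (hck ▸ center_mem_centers hk))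

theorem center_ne_of_centerCount_eq_one (hc : ∀ i, IsStarForestOn (F i) (c i))
    {u v w : Fin n} {i k : Fin t} (huv : u ≠ v) (huw : u ≠ w)
    (hu : centerCount (centers F c) u = 1) (hui : u ∈ centers F c i) (hwv : s(w, v) ∈ F i)
    (huvk : s(u, v) ∈ F k) : c k s(u, v) ≠ u := by
  intro hck
  have huk : u ∈ centers F c k := hck ▸ center_mem_centers huvk
  obtain rfl := eq_of_centerCount_eq_one hu hui huk
  exact huv (hck.symm.trans ((hc k).center_eq_of_mk_mem_of_mk_mem huvk hwv huw))

theorem centerCount_ne_two_of_mem_centers (hc : ∀ i, IsStarForestOn (F i) (c i))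
    (hcover : ∀ u v, u ≠ v → ∃ i, s(u, v) ∈ F i) {u₁ u₂ w : Fin n} {i₁ i₂ : Fin t}
    (hi : i₁ ≠ i₂) (hu : u₁ ≠ u₂) (hu₁w : u₁ ≠ w) (hu₂w : u₂ ≠ w)
    (hu₁ : centerCount (centers F c) u₁ = 1) (hu₂ : centerCount (centers F c) u₂ = 1)
    (hu₁i : u₁ ∈ centers F c i₁) (hwi₁ : w ∈ centers F c i₁)
    (hu₂i : u₂ ∈ centers F c i₂) (hwi₂ : w ∈ centers F c i₂) :
    centerCount (centers F c) w ≠ 2 := by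
  intro hw
  have hcross : ∀ {a : Fin n} {j j' : Fin t}, j ≠ j' → a ≠ w →
      centerCount (centers F c) a = 1 → a ∈ centers F c j → w ∈ centers F c j →
      w ∈ centers F c j' → s(w, a) ∈ F j' := by
    intro a j j' hj haw ha haj hwj hwj'
    obtain ⟨k, hkj, hk, hck⟩ := exists_ne_mk_mem_of_centerCount_eq_one hc hcover haw ha haj hwj
    obtain rfl := (eq_or_eq_of_centerCount_eq_two hw hj hwj hwj'
      (hck ▸ center_mem_centers hk)).resolve_left hkj
    rwa [Sym2.eq_swap]
  obtain ⟨k, hk⟩ := hcover u₁ u₂ hu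
  rcases (hc k).center_eq_or_center_eq hk with hck | hck
  · exact center_ne_of_centerCount_eq_one hc hu hu₁w hu₁ hu₁i
      (hcross hi.symm hu₂w hu₂ hu₂i hwi₂ hwi₁) hk hck
  · rw [Sym2.eq_swap] at hk hck
    exact center_ne_of_centerCount_eq_one hc hu.symm hu₂w hu₂ hu₂i
      (hcross hi hu₁w hu₁ hu₁i hwi₁ hwi₂) hk hck

end Cover

theorem stmt3_general (n t : ℕ) (hn : 3 < n) (F : Fin t → Finset (Sym2 (Fin n)))
    (h2 : ∀ i, IsKStarForest (F i) 2)
    (hcover : ∀ e ∈ Kedges n, ∃ i, e ∈ F i) :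
    (3 * n + 3) / 4 ≤ t := by
  rcases le_or_gt n (t + 1) with hnt | htn
  · omega
  choose c hc hcard using h2
  have hcover' : ∀ u v : Fin n, u ≠ v → ∃ i, s(u, v) ∈ F i := fun u v huv =>
    hcover _ (by simpa [Kedges] using huv)
  have hcount := three_mul_card_le_four_mul_card hcard (exists_mem_centers hc hcover' htn)
    (fun _ _ _ huw hu => centerCount_ne_one_of_mem_centers hc hcover' huw hu)
    (fun _ _ _ _ _ hi hu hu₁w hu₂w hu₁ hu₂ =>
      centerCount_ne_two_of_mem_centers hc hcover' hi hu hu₁w hu₂w hu₁ hu₂)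
  simp only [Fintype.card_fin] at hcount
  omega

/-- for every n > 3, the edge set of K_n cannot be covered by fewer
than ⌈3n/4⌉ 2-star-forests. -/
theorem stmt3 (n t : ℕ) (hn : 3 < n) (F : Fin t → Finset (Sym2 (Fin n)))
    (h2 : ∀ i, IsKStarForest (F i) 2)
    (hsub : ∀ i, F i ⊆ Kedges n)
    (hcover : ∀ e ∈ Kedges n, ∃ i, e ∈ F i) :
    (3 * n + 3) / 4 ≤ t :=
  stmt3_general n t hn F h2 hcover
end

section
/- Suppose the edge set of K_n is covered by a family of 2-star-forests, each with two designated centers, and form the auxiliary graph G joining the centers of each member. If {u1, u2, u3} is a connected component of G consisting of exactly the two edges u1u2 and u1u3, then at least one of the three edges of K_n among u1, u2, u3 is not covered by the family, a contradiction; hence G has no component with exactly two edges of this form. -/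
namespace IsStarForestOn

variable {n : ℕ} {E : Finset (Sym2 (Fin n))} {c : Sym2 (Fin n) → Fin n}

lemma apply_eq_of_mem (h : IsStarForestOn E c) {x : Fin n} (hx : ∃ p ∈ E, c p = x)
    {e : Sym2 (Fin n)} (he : e ∈ E) (hxe : x ∈ e) : c e = x := by
  obtain ⟨p, hp, rfl⟩ := hx
  by_cases hep : e = p
  · rw [hep]
  · exact h.2 e he p hp hep _ hxe (h.1 p hp)

end IsStarForestOn

namespace IsTwoStar

variable {n : ℕ} {E : Finset (Sym2 (Fin n))} {a b : Fin n}

lemma mem_or_mem (h : IsTwoStar E a b) {e : Sym2 (Fin n)} (he : e ∈ E) : a ∈ e ∨ b ∈ e := by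
  obtain ⟨c, hsf, hc, -⟩ := h
  exact (hc e he).imp (fun hce : c e = a => hce ▸ hsf.1 e he)
    (fun hce : c e = b => hce ▸ hsf.1 e he)

lemma exists_center (h : IsTwoStar E a b) :
    ∃ c, IsStarForestOn E c ∧
      ∀ x ∈ ({a, b} : Finset (Fin n)), ∀ e ∈ E, x ∈ e → c e = x := by
  obtain ⟨c, hsf, -, ha, hb⟩ := h
  refine ⟨c, hsf, fun x hx e he hxe => ?_⟩
  rcases Finset.mem_insert.mp hx with rfl | hx
  · exact hsf.apply_eq_of_mem ha he hxe
  obtain rfl := Finset.mem_singleton.mp hx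
  exact hsf.apply_eq_of_mem hb he hxe

lemma notMem_of_mem_centers (h : IsTwoStar E a b) {x y : Fin n}
    (hx : x ∈ ({a, b} : Finset (Fin n))) (hy : y ∈ ({a, b} : Finset (Fin n))) (hxy : x ≠ y) :
    s(x, y) ∉ E := by
  obtain ⟨c, -, hcenter⟩ := h.exists_center
  intro he
  exact hxy ((hcenter x hx _ he (Sym2.mem_mk_left x y)).symm.trans
    (hcenter y hy _ he (Sym2.mem_mk_right x y)))

/-- Two edges from distinct centers to a common vertex `z` would both have to be centered at `z`. -/
lemma notMem_of_mem_of_mem_centers (h : IsTwoStar E a b) {x y z : Fin n}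
    (hx : x ∈ ({a, b} : Finset (Fin n))) (hy : y ∈ ({a, b} : Finset (Fin n))) (hxy : x ≠ y)
    (hxz : s(x, z) ∈ E) : s(y, z) ∉ E := by
  obtain ⟨c, hsf, hcenter⟩ := h.exists_center
  intro hyz
  have hne : s(x, z) ≠ s(y, z) := fun heq => hxy (Sym2.congr_left.mp heq)
  have hxz' : x = z := (hcenter x hx _ hxz (Sym2.mem_mk_left x z)).symm.trans
    (hsf.2 _ hxz _ hyz hne z (Sym2.mem_mk_right x z) (Sym2.mem_mk_right y z))
  have hyz' : y = z := (hcenter y hy _ hyz (Sym2.mem_mk_left y z)).symm.trans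
    (hsf.2 _ hyz _ hxz hne.symm z (Sym2.mem_mk_right y z) (Sym2.mem_mk_right x z))
  exact hxy (hxz'.trans hyz'.symm)

end IsTwoStar

theorem stmt9_general (n t : ℕ) (F : Fin t → Finset (Sym2 (Fin n)))
    (a b : Fin t → Fin n)
    (h2 : ∀ i, IsTwoStar (F i) (a i) (b i))
    (hcover : ∀ e ∈ Kedges n, ∃ i, e ∈ F i)
    (u1 u2 u3 : Fin n) (h12 : u1 ≠ u2) (h13 : u1 ≠ u3) (h23 : u2 ≠ u3)
    (i1 i2 : Fin t)
    (hi1 : ({a i1, b i1} : Finset (Fin n)) = {u1, u2})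
    (hi2 : ({a i2, b i2} : Finset (Fin n)) = {u1, u3})
    (hcomp : ∀ i, (a i ∈ ({u1, u2, u3} : Finset (Fin n)) ∨
        b i ∈ ({u1, u2, u3} : Finset (Fin n))) → i = i1 ∨ i = i2) :
    False := by
  set U : Finset (Fin n) := {u1, u2, u3}
  have hcovered : ∀ x ∈ U, ∀ y ∈ U, x ≠ y → s(x, y) ∈ F i1 ∨ s(x, y) ∈ F i2 := by
    intro x hx y hy hxy
    obtain ⟨i, hi⟩ := hcover s(x, y) (by simp [Kedges, hxy])
    have hU : ∀ v ∈ s(x, y), v ∈ U := fun v hv => by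
      rcases Sym2.mem_iff.mp hv with rfl | rfl <;> assumption
    rcases hcomp i ((h2 i).mem_or_mem hi |>.imp (hU _) (hU _)) with rfl | rfl
    exacts [.inl hi, .inr hi]
  have hu1 : u1 ∈ ({a i1, b i1} : Finset (Fin n)) := by simp [hi1]
  have hu2 : u2 ∈ ({a i1, b i1} : Finset (Fin n)) := by simp [hi1]
  have hu1' : u1 ∈ ({a i2, b i2} : Finset (Fin n)) := by simp [hi2]
  have hu3 : u3 ∈ ({a i2, b i2} : Finset (Fin n)) := by simp [hi2]
  have h12_mem : s(u1, u2) ∈ F i2 :=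
    (hcovered u1 (by simp [U]) u2 (by simp [U]) h12).resolve_left
      ((h2 i1).notMem_of_mem_centers hu1 hu2 h12)
  have h13_mem : s(u1, u3) ∈ F i1 :=
    (hcovered u1 (by simp [U]) u3 (by simp [U]) h13).resolve_right
      ((h2 i2).notMem_of_mem_centers hu1' hu3 h13)
  rcases hcovered u2 (by simp [U]) u3 (by simp [U]) h23 with h23_mem | h23_mem
  · exact (h2 i1).notMem_of_mem_of_mem_centers hu1 hu2 h12 h13_mem h23_mem
  · exact (h2 i2).notMem_of_mem_of_mem_centers hu1' hu3 h13 h12_mem (Sym2.eq_swap ▸ h23_mem)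

/-- in a covering of K_n by 2-star-forests with two designated centers each,
the auxiliary graph has no component on {u1, u2, u3} consisting of exactly the two
edges u1u2 and u1u3: that situation is contradictory. -/
theorem stmt9 (n t : ℕ) (F : Fin t → Finset (Sym2 (Fin n)))
    (a b : Fin t → Fin n) (hab : ∀ i, a i ≠ b i)
    (h2 : ∀ i, IsTwoStar (F i) (a i) (b i))
    (hsub : ∀ i, F i ⊆ Kedges n)
    (hcover : ∀ e ∈ Kedges n, ∃ i, e ∈ F i)
    (u1 u2 u3 : Fin n) (h12 : u1 ≠ u2) (h13 : u1 ≠ u3) (h23 : u2 ≠ u3)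
    (i1 i2 : Fin t)
    (hi1 : ({a i1, b i1} : Finset (Fin n)) = {u1, u2})
    (hi2 : ({a i2, b i2} : Finset (Fin n)) = {u1, u3})
    (hcomp : ∀ i, (a i ∈ ({u1, u2, u3} : Finset (Fin n)) ∨
        b i ∈ ({u1, u2, u3} : Finset (Fin n))) → i = i1 ∨ i = i2) :
    False :=
  stmt9_general n t F a b h2 hcover u1 u2 u3 h12 h13 h23 i1 i2 hi1 hi2 hcomp
end

section
/- For every even n = 2t with t ≥ 1 and every k ≥ 2, the edge set of K_n can be covered by n/2 + ⌈n/(2k)⌉ k-star-forests. -/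
/-!
Place the `2t` vertices on the cycle `ℤ/2t`. For `i < t`, the stars joining `i` and its antipode
`i + t` to their `t - 1` successors lie in the two opposite half-cycles, hence form a
2-star-forest; since every vertex is `i` or `i + t` for some `i < t`, these `t` forests cover
every chord of cyclic length less than `t`. What remains is the antipodal matching `{x, x + t}`,
which splits into `⌈t/k⌉` blocks of at most `k` edges, each a `k`-star-forest.
-/

open Finset Fin.NatCast

lemma div_lt_add_sub_one_div {i t k : ℕ} (hi : i < t) (hk : 0 < k) : i / k < (t + k - 1) / k := by
  rw [← Nat.add_one_le_iff, Nat.le_div_iff_mul_le hk, add_mul, one_mul]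
  have := Nat.div_mul_le_self i k
  omega

section Stars

variable {n : ℕ}

def starEdges (c : Fin n) (L : Finset (Fin n)) : Finset (Sym2 (Fin n)) :=
  L.image fun l => s(c, l)

lemma mem_starEdges {c : Fin n} {L : Finset (Fin n)} {e : Sym2 (Fin n)} :
    e ∈ starEdges c L ↔ ∃ l ∈ L, s(c, l) = e :=
  mem_image

/-- The endpoint of `e` lying in `C`; an arbitrary endpoint unless exactly one lies in `C`. -/
noncomputable def centerIn (C : Finset (Fin n)) (e : Sym2 (Fin n)) : Fin n :=
  if (Quot.out e).1 ∈ C then (Quot.out e).1 else (Quot.out e).2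

lemma centerIn_mk {C : Finset (Fin n)} {c l : Fin n} (hc : c ∈ C) (hl : l ∉ C) :
    centerIn C s(c, l) = c := by
  have hout : s((Quot.out s(c, l)).1, (Quot.out s(c, l)).2) = s(c, l) := Quot.out_eq _
  rcases Sym2.eq_iff.1 hout with ⟨h₁, h₂⟩ | ⟨h₁, h₂⟩ <;> simp [centerIn, h₁, h₂, hc, hl]

lemma biUnion_star_subset_kedges {C : Finset (Fin n)} {L : Fin n → Finset (Fin n)}
    (hL : ∀ c ∈ C, c ∉ L c) : C.biUnion (fun c => starEdges c (L c)) ⊆ Kedges n := by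
  refine biUnion_subset.2 fun c hc e he => ?_
  obtain ⟨l, hl, rfl⟩ := mem_starEdges.1 he
  have hcl : c ≠ l := by rintro rfl; exact hL c hc hl
  simpa [Kedges] using hcl

theorem isKStarForest_biUnion_star {C : Finset (Fin n)} {L : Fin n → Finset (Fin n)}
    (hL : ∀ c ∈ C, c ∉ L c) (hdisj : (C : Set (Fin n)).PairwiseDisjoint fun c => insert c (L c)) :
    IsKStarForest (C.biUnion fun c => starEdges c (L c)) #C := by
  have leaf_notMem : ∀ c ∈ C, ∀ l ∈ L c, l ∉ C := fun c hc l hl hlC =>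
    hL c hc (hdisj.elim_finset hc hlC l (mem_insert_of_mem hl) (mem_insert_self l _) ▸ hl)
  have center_eq : ∀ c ∈ C, ∀ l ∈ L c, centerIn C s(c, l) = c := fun c hc l hl =>
    centerIn_mk hc (leaf_notMem c hc l hl)
  refine ⟨centerIn C, ⟨?_, ?_⟩, ?_⟩
  · intro e he
    obtain ⟨c, hc, l, hl, rfl⟩ : ∃ c ∈ C, ∃ l ∈ L c, s(c, l) = e := by
      simpa [mem_starEdges] using he
    rw [center_eq c hc l hl]
    exact Sym2.mem_mk_left c l
  · intro e he f hf hef v hve hvf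
    obtain ⟨c, hc, l, hl, rfl⟩ : ∃ c ∈ C, ∃ l ∈ L c, s(c, l) = e := by
      simpa [mem_starEdges] using he
    obtain ⟨c', hc', l', hl', rfl⟩ : ∃ c ∈ C, ∃ l ∈ L c, s(c, l) = f := by
      simpa [mem_starEdges] using hf
    have hv : v ∈ insert c (L c) := by
      rcases Sym2.mem_iff.1 hve with rfl | rfl <;> simp [hl]
    have hv' : v ∈ insert c' (L c') := by
      rcases Sym2.mem_iff.1 hvf with rfl | rfl <;> simp [hl']
    obtain rfl : c = c' := hdisj.elim_finset hc hc' v hv hv'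
    rw [center_eq c hc l hl]
    rcases Sym2.mem_iff.1 hve with rfl | rfl
    · rfl
    rcases Sym2.mem_iff.1 hvf with rfl | rfl
    · exact absurd hl (hL _ hc)
    · exact absurd rfl hef
  · refine card_le_card fun v hv => ?_
    obtain ⟨e, he, rfl⟩ := mem_image.1 hv
    obtain ⟨c, hc, l, hl, rfl⟩ : ∃ c ∈ C, ∃ l ∈ L c, s(c, l) = e := by
      simpa [mem_starEdges] using he
    rwa [center_eq c hc l hl]

lemma IsKStarForest.mono {E : Finset (Sym2 (Fin n))} {k k' : ℕ} (h : IsKStarForest E k)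
    (hk : k ≤ k') : IsKStarForest E k' :=
  let ⟨c, hc, hcard⟩ := h
  ⟨c, hc, hcard.trans hk⟩

end Stars

section Cycle

variable {t : ℕ} [NeZero (2 * t)]

variable (t) in
lemma pos_of_neZero_two_mul : 0 < t :=
  Nat.pos_of_mul_pos_left (NeZero.pos (2 * t))

lemma val_half : ((t : Fin (2 * t)) : ℕ) = t := by
  rw [Fin.val_natCast, Nat.mod_eq_of_lt (by linarith [pos_of_neZero_two_mul t])]

lemma half_add_half : (t : Fin (2 * t)) + t = 0 := by
  rw [← Nat.cast_add, ← two_mul, Fin.natCast_self]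

lemma val_add_half (x : Fin (2 * t)) :
    ((x + t : Fin (2 * t)) : ℕ) = if (x : ℕ) < t then (x : ℕ) + t else (x : ℕ) - t := by
  rw [Fin.val_add_eq_ite, val_half]
  split_ifs <;> omega

lemma exists_lower_half (a : Fin (2 * t)) :
    ∃ x : Fin (2 * t), (x : ℕ) < t ∧ (a = x ∨ a = x + t) := by
  by_cases ha : (a : ℕ) < t
  · exact ⟨a, ha, Or.inl rfl⟩
  · refine ⟨a + t, by rw [val_add_half, if_neg ha]; omega, Or.inr ?_⟩
    rw [add_assoc, half_add_half, add_zero]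

def arcAfter (a : Fin (2 * t)) : Finset (Fin (2 * t)) :=
  univ.filter fun v => 0 < ((v - a : Fin (2 * t)) : ℕ) ∧ ((v - a : Fin (2 * t)) : ℕ) < t

lemma self_notMem_arcAfter (a : Fin (2 * t)) : a ∉ arcAfter a := by
  simp [arcAfter]

lemma disjoint_arcAfter_half (a : Fin (2 * t)) :
    Disjoint (insert a (arcAfter a)) (insert (a + t) (arcAfter (a + t))) := by
  have hwin : ∀ c v : Fin (2 * t), v ∈ insert c (arcAfter c) → ((v - c : Fin (2 * t)) : ℕ) < t :=
    fun c v hv => by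
      rcases mem_insert.1 hv with rfl | hv
      · simpa using pos_of_neZero_two_mul t
      · exact (mem_filter.1 hv).2.2
  refine disjoint_left.2 fun v hv hv' => ?_
  have hsub : v - (a + t) = (v - a) + t := by
    rw [sub_add_eq_sub_sub, sub_eq_add_neg (v - a), neg_eq_of_add_eq_zero_left half_add_half]
  have h := hwin _ _ hv'
  rw [hsub, val_add_half, if_pos (hwin _ _ hv)] at h
  omega

def twoStarForest (i : Fin (2 * t)) : Finset (Sym2 (Fin (2 * t))) :=
  ({i, i + t} : Finset (Fin (2 * t))).biUnion fun c => starEdges c (arcAfter c)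

lemma twoStarForest_isKStarForest {k : ℕ} (hk : 2 ≤ k) (i : Fin (2 * t)) :
    IsKStarForest (twoStarForest i) k := by
  have hdisj : ({i, i + t} : Set (Fin (2 * t))).PairwiseDisjoint
      fun c => insert c (arcAfter c) := by
    refine Set.pairwise_pair.2 fun _ => ⟨disjoint_arcAfter_half i, ?_⟩
    have h := disjoint_arcAfter_half (i + t : Fin (2 * t))
    rwa [add_assoc, half_add_half, add_zero] at h
  exact (isKStarForest_biUnion_star (fun c _ => self_notMem_arcAfter c)
    (by rwa [coe_pair])).mono (card_le_two.trans hk)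

lemma twoStarForest_subset_kedges (i : Fin (2 * t)) : twoStarForest i ⊆ Kedges (2 * t) :=
  biUnion_star_subset_kedges fun c _ => self_notMem_arcAfter c

def antipodalBlock (k j : ℕ) : Finset (Sym2 (Fin (2 * t))) :=
  (univ.filter fun c : Fin (2 * t) => (c : ℕ) < t ∧ (c : ℕ) / k = j).biUnion
    fun c => starEdges c {c + t}

lemma self_ne_add_half {c : Fin (2 * t)} (hc : (c : ℕ) < t) : c ≠ c + t := by
  intro h
  have := congrArg Fin.val h
  rw [val_add_half, if_pos hc] at this
  omega

lemma antipodalBlock_isKStarForest {k : ℕ} (hk : 0 < k) (j : ℕ) :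
    IsKStarForest (antipodalBlock (t := t) k j) k := by
  set C := univ.filter fun c : Fin (2 * t) => (c : ℕ) < t ∧ (c : ℕ) / k = j
  have hL : ∀ c ∈ C, c ∉ ({c + t} : Finset (Fin (2 * t))) := fun c hc =>
    notMem_singleton.2 (self_ne_add_half (mem_filter.1 hc).2.1)
  have hdisj : (C : Set (Fin (2 * t))).PairwiseDisjoint
      fun c => ({c, c + t} : Finset (Fin (2 * t))) := by
    intro c hc c' hc' hne
    obtain ⟨hc, -⟩ : (c : ℕ) < t ∧ _ := by simpa [C] using hc
    obtain ⟨hc', -⟩ : (c' : ℕ) < t ∧ _ := by simpa [C] using hc'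
    have hne' : (c : ℕ) ≠ c' := Fin.val_ne_of_ne hne
    rw [Function.onFun, disjoint_left]
    intro v hv hv'
    simp only [mem_insert, mem_singleton] at hv hv'
    rcases hv with rfl | rfl <;> rcases hv' with h | h <;>
      · simp only [Fin.ext_iff, val_add_half, hc, hc', if_true] at h
        omega
  have hcard : #C ≤ k := by
    calc #C ≤ #(Ico (k * j) (k * j + k)) := by
          refine card_le_card_of_injOn Fin.val (fun c hc => ?_) Fin.val_injective.injOn
          have hcj := (mem_filter.1 hc).2.2
          have := Nat.div_add_mod (c : ℕ) k
          have := Nat.mod_lt (c : ℕ) hk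
          simp only [coe_Ico, Set.mem_Ico]
          rw [← hcj]
          omega
      _ = k := by simp
  exact (isKStarForest_biUnion_star hL hdisj).mono hcard

lemma antipodalBlock_subset_kedges (k j : ℕ) : antipodalBlock k j ⊆ Kedges (2 * t) :=
  biUnion_star_subset_kedges fun _ hc =>
    notMem_singleton.2 (self_ne_add_half (mem_filter.1 hc).2.1)

lemma mem_antipodalBlock {x : Fin (2 * t)} (hx : (x : ℕ) < t) (k : ℕ) :
    s(x, x + t) ∈ antipodalBlock k ((x : ℕ) / k) :=
  mem_biUnion.2 ⟨x, by simp [hx], mem_starEdges.2 ⟨x + t, mem_singleton_self _, rfl⟩⟩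

lemma mem_starEdges_arcAfter_or_eq_add_half {a b : Fin (2 * t)} (hab : a ≠ b) :
    s(a, b) ∈ starEdges a (arcAfter a) ∨ s(b, a) ∈ starEdges b (arcAfter b) ∨ b = a + t := by
  have hd : b - a ≠ 0 := sub_ne_zero.2 hab.symm
  rcases lt_trichotomy ((b - a : Fin (2 * t)) : ℕ) t with hlt | heq | hgt
  · left
    exact mem_starEdges.2 ⟨b, by simp [arcAfter, hlt, Fin.pos_iff_ne_zero, hd], rfl⟩
  · right; right
    rw [← sub_eq_iff_eq_add', Fin.ext_iff, heq, val_half]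
  · right; left
    have hneg : ((a - b : Fin (2 * t)) : ℕ) = 2 * t - ((b - a : Fin (2 * t)) : ℕ) := by
      rw [← neg_sub, Fin.val_neg, if_neg hd]
    have := (b - a).isLt
    refine mem_starEdges.2 ⟨a, ?_, rfl⟩
    simp only [arcAfter, mem_filter, mem_univ, true_and, hneg]
    omega

lemma exists_mem_twoStarForest {a b : Fin (2 * t)} (h : s(a, b) ∈ starEdges a (arcAfter a)) :
    ∃ x : Fin (2 * t), (x : ℕ) < t ∧ s(a, b) ∈ twoStarForest x := by
  obtain ⟨x, hx, ha⟩ := exists_lower_half a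
  exact ⟨x, hx, mem_biUnion.2 ⟨a, by simpa using ha, h⟩⟩

lemma exists_antipodal_eq (a : Fin (2 * t)) :
    ∃ x : Fin (2 * t), (x : ℕ) < t ∧
      s(a, a + (t : Fin (2 * t))) = s(x, x + (t : Fin (2 * t))) := by
  obtain ⟨x, hx, rfl | rfl⟩ := exists_lower_half a
  · exact ⟨a, hx, rfl⟩
  · rw [add_assoc, half_add_half, add_zero, Sym2.eq_swap]
    exact ⟨_, hx, rfl⟩

end Cycle

/-- for n = 2t (t ≥ 1) and k ≥ 2, the edge set of K_n can be covered
by n/2 + ⌈n/(2k)⌉ k-star-forests. -/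
theorem stmt10 (t k : ℕ) (ht : 1 ≤ t) (hk : 2 ≤ k) :
    ∃ F : Fin (t + (t + k - 1) / k) → Finset (Sym2 (Fin (2 * t))),
      (∀ i, IsKStarForest (F i) k ∧ F i ⊆ Kedges (2 * t)) ∧
      ∀ e ∈ Kedges (2 * t), ∃ i, e ∈ F i := by
  have : NeZero (2 * t) := ⟨by omega⟩
  refine ⟨Fin.append (fun i : Fin t => twoStarForest ⟨i, by omega⟩)
    (fun j => antipodalBlock k j), fun i => ?_, ?_⟩
  · induction i using Fin.addCases with
    | left i =>
      rw [Fin.append_left]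
      exact ⟨twoStarForest_isKStarForest hk _, twoStarForest_subset_kedges _⟩
    | right j =>
      rw [Fin.append_right]
      exact ⟨antipodalBlock_isKStarForest (by omega) _, antipodalBlock_subset_kedges _ _⟩
  intro e he
  induction e using Sym2.ind with | h a b =>
  have hab : a ≠ b := by simpa [Kedges] using he
  rcases mem_starEdges_arcAfter_or_eq_add_half hab with h | h | rfl
  · obtain ⟨x, hx, hmem⟩ := exists_mem_twoStarForest h
    exact ⟨Fin.castAdd _ ⟨x, hx⟩, by rw [Fin.append_left]; exact hmem⟩
  · obtain ⟨x, hx, hmem⟩ := exists_mem_twoStarForest h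
    exact ⟨Fin.castAdd _ ⟨x, hx⟩, by rw [Fin.append_left, Sym2.eq_swap]; exact hmem⟩
  · obtain ⟨x, hx, hax⟩ := exists_antipodal_eq a
    refine ⟨Fin.natAdd t ⟨x / k, div_lt_add_sub_one_div hx (by omega)⟩, ?_⟩
    rw [Fin.append_right, hax]
    exact mem_antipodalBlock hx k
end
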